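/- arXiv:2405.10994 — 3 statements merged into one kernel-verified Lean document; each statement's English description precedes it below -/
import Mathlib

section
/- Lower boundary of the privacy region: let M be an (ε, δ)-differentially private mechanism with respect to a symmetric neighboring relation, let D, D' be neighboring datasets, and let S be any measurable subset of the output space. Define the false positive rate α = Pr[M(D) ∈ S] and the false negative rate β = Pr[M(D') ∉ S]. Then α + e^ε · β ≥ 1 − δ and e^ε · α + β ≥ 1 − δ. -/
open MeasureTheory

/-- A randomized mechanism `M` is `(ε, δ)`-differentially private with respect to a
neighboring relation `Neighbor` if for all neighboring datasets `d, d'` and all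
measurable sets `S`, `Pr[M d ∈ S] ≤ exp ε * Pr[M d' ∈ S] + δ`. -/
def IsDP {D R : Type*} [MeasurableSpace R] (M : D → Measure R)
    (Neighbor : D → D → Prop) (ε δ : ℝ) : Prop :=
  ∀ d d' : D, Neighbor d d' → ∀ S : Set R, MeasurableSet S →
    ((M d) S).toReal ≤ Real.exp ε * ((M d') S).toReal + δ

theorem IsDP.one_sub_le_add_exp_mul_compl {D R : Type*} [MeasurableSpace R]
    {M : D → Measure R} [∀ d, IsProbabilityMeasure (M d)] {Neighbor : D → D → Prop}
    {ε δ : ℝ} (hM : IsDP M Neighbor ε δ) {d d' : D} (hN : Neighbor d d') {S : Set R}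
    (hS : MeasurableSet S) :
    1 - δ ≤ ((M d) S).toReal + Real.exp ε * ((M d') Sᶜ).toReal := by
  have hdp := hM d d' hN Sᶜ hS.compl
  have hcompl : ((M d) Sᶜ).toReal = 1 - ((M d) S).toReal := probReal_compl_eq_one_sub hS
  linarith

theorem privacy_region_lower_boundary_general {D R : Type*} [MeasurableSpace R]
    (M : D → Measure R) [∀ d, IsProbabilityMeasure (M d)]
    (Neighbor : D → D → Prop) (hsymm : Symmetric Neighbor)
    (ε δ : ℝ)
    (hM : IsDP M Neighbor ε δ)
    (d d' : D) (hN : Neighbor d d') (S : Set R) (hS : MeasurableSet S) :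
    1 - δ ≤ ((M d) S).toReal + Real.exp ε * ((M d') Sᶜ).toReal ∧
    1 - δ ≤ Real.exp ε * ((M d) S).toReal + ((M d') Sᶜ).toReal := by
  refine ⟨hM.one_sub_le_add_exp_mul_compl hN hS, ?_⟩
  have h := hM.one_sub_le_add_exp_mul_compl (hsymm hN) hS.compl
  rwa [compl_compl, add_comm] at h

/-- Lower boundary of the privacy region: for an `(ε, δ)`-DP mechanism (with respect to
a symmetric neighboring relation), neighboring datasets `d, d'`, and a measurable
rejection region `S`, with false positive rate `α = Pr[M d ∈ S]` and false negative rate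
`β = Pr[M d' ∉ S]`, we have `α + exp ε * β ≥ 1 - δ` and `exp ε * α + β ≥ 1 - δ`. -/
theorem privacy_region_lower_boundary {D R : Type*} [MeasurableSpace R]
    (M : D → Measure R) [∀ d, IsProbabilityMeasure (M d)]
    (Neighbor : D → D → Prop) (hsymm : Symmetric Neighbor)
    (ε δ : ℝ) (hε : 0 ≤ ε) (hδ0 : 0 ≤ δ) (hδ1 : δ ≤ 1)
    (hM : IsDP M Neighbor ε δ)
    (d d' : D) (hN : Neighbor d d') (S : Set R) (hS : MeasurableSet S) :
    1 - δ ≤ ((M d) S).toReal + Real.exp ε * ((M d') Sᶜ).toReal ∧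
    1 - δ ≤ Real.exp ε * ((M d) S).toReal + ((M d') Sᶜ).toReal :=
  privacy_region_lower_boundary_general M Neighbor hsymm ε δ hM d d' hN S hS
end

section
/- Validity of the empirical privacy estimate: let M be an (ε, δ)-differentially private mechanism with respect to a symmetric neighboring relation, let D, D' be neighboring datasets, and let S be any measurable subset of the output space, with false positive rate α = Pr[M(D) ∈ S] and false negative rate β = Pr[M(D') ∉ S], where α > 0 and β > 0. Then ε ≥ ε_emp, where ε_emp = max{ ln((1 − α − δ)/β), ln((1 − β − δ)/α), 0 }. In particular, for a pure ε-differentially private mechanism (δ = 0), ε ≥ max{ ln((1 − α)/β), ln((1 − β)/α), 0 }. -/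
/-! Applying the privacy inequality to `Sᶜ` for `(d, d')` and to `S` for `(d', d)` gives
`1 - α ≤ e^ε β + δ` and `1 - β ≤ e^ε α + δ`; taking logarithms bounds both terms of `ε_emp`. -/

open MeasureTheory

/-- The empirical privacy estimate
`ε_emp = max { ln((1 − α − δ)/β), ln((1 − β − δ)/α), 0 }`, where a logarithm term whose
argument is nonpositive does not contribute to the maximum. -/
noncomputable def epsEmp (δ α β : ℝ) : ℝ :=
  max (max (if 0 < (1 - α - δ) / β then Real.log ((1 - α - δ) / β) else 0)
           (if 0 < (1 - β - δ) / α then Real.log ((1 - β - δ) / α) else 0)) 0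

lemma IsDP.one_sub_le_of_compl {D R : Type*} [MeasurableSpace R] {M : D → Measure R}
    [∀ d, IsProbabilityMeasure (M d)] {Neighbor : D → D → Prop} {ε δ : ℝ}
    (hM : IsDP M Neighbor ε δ) {d d' : D} (hN : Neighbor d d') {S : Set R}
    (hS : MeasurableSet S) :
    1 - ((M d) S).toReal ≤ Real.exp ε * ((M d') Sᶜ).toReal + δ := by
  have h := hM d d' hN Sᶜ hS.compl
  rwa [← measureReal_def, probReal_compl_eq_one_sub hS, measureReal_def] at h

lemma IsDP.one_sub_compl_le {D R : Type*} [MeasurableSpace R] {M : D → Measure R}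
    [∀ d, IsProbabilityMeasure (M d)] {Neighbor : D → D → Prop} {ε δ : ℝ}
    (hM : IsDP M Neighbor ε δ) {d d' : D} (hN : Neighbor d d') {S : Set R}
    (hS : MeasurableSet S) :
    1 - ((M d) Sᶜ).toReal ≤ Real.exp ε * ((M d') S).toReal + δ := by
  have h := hM d d' hN S hS
  rwa [← measureReal_def, ← sub_sub_cancel 1 ((M d).real S),
    ← probReal_compl_eq_one_sub hS] at h

/-- `0 < (1 - x - δ) / y` already forces `y ≠ 0`, as `_ / 0 = 0`. -/
lemma log_div_le_of_one_sub_le {ε δ x y : ℝ} (hy : 0 ≤ y)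
    (h : 1 - x ≤ Real.exp ε * y + δ) (hpos : 0 < (1 - x - δ) / y) :
    Real.log ((1 - x - δ) / y) ≤ ε := by
  have hy' : 0 < y := hy.lt_of_ne (by rintro rfl; simp at hpos)
  rw [Real.log_le_iff_le_exp hpos, div_le_iff₀ hy']
  linarith

lemma ite_log_div_le_of_one_sub_le {ε δ x y : ℝ} (hε : 0 ≤ ε) (hy : 0 ≤ y)
    (h : 1 - x ≤ Real.exp ε * y + δ) :
    (if 0 < (1 - x - δ) / y then Real.log ((1 - x - δ) / y) else 0) ≤ ε := by
  split_ifs with hpos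
  · exact log_div_le_of_one_sub_le hy h hpos
  · exact hε

theorem empirical_estimate_valid_general {D R : Type*} [MeasurableSpace R]
    (M : D → Measure R) [∀ d, IsProbabilityMeasure (M d)]
    (Neighbor : D → D → Prop) (hsymm : Symmetric Neighbor)
    (ε δ : ℝ) (hε : 0 ≤ ε)
    (hM : IsDP M Neighbor ε δ)
    (d d' : D) (hN : Neighbor d d') (S : Set R) (hS : MeasurableSet S) :
    epsEmp δ (((M d) S).toReal) (((M d') Sᶜ).toReal) ≤ ε :=
  max_le (max_le
    (ite_log_div_le_of_one_sub_le hε ENNReal.toReal_nonneg (hM.one_sub_le_of_compl hN hS))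
    (ite_log_div_le_of_one_sub_le hε ENNReal.toReal_nonneg (hM.one_sub_compl_le (hsymm hN) hS)))
    hε

/-- Validity of the empirical privacy estimate: for an `(ε, δ)`-DP mechanism (with
respect to a symmetric neighboring relation), neighboring datasets `d, d'`, and a
measurable rejection region `S` with false positive rate `α = Pr[M d ∈ S] > 0` and false
negative rate `β = Pr[M d' ∉ S] > 0`, the empirical estimate
`ε_emp = max { ln((1 − α − δ)/β), ln((1 − β − δ)/α), 0 }` is a lower bound on `ε`. -/
theorem empirical_estimate_valid {D R : Type*} [MeasurableSpace R]
    (M : D → Measure R) [∀ d, IsProbabilityMeasure (M d)]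
    (Neighbor : D → D → Prop) (hsymm : Symmetric Neighbor)
    (ε δ : ℝ) (hε : 0 ≤ ε) (hδ0 : 0 ≤ δ) (hδ1 : δ ≤ 1)
    (hM : IsDP M Neighbor ε δ)
    (d d' : D) (hN : Neighbor d d') (S : Set R) (hS : MeasurableSet S)
    (hα : 0 < ((M d) S).toReal) (hβ : 0 < ((M d') Sᶜ).toReal) :
    epsEmp δ (((M d) S).toReal) (((M d') Sᶜ).toReal) ≤ ε :=
  empirical_estimate_valid_general M Neighbor hsymm ε δ hε hM d d' hN S hS
end

section
/- Maximum auditable ε: fix δ ∈ [0,1] and a constant c with 0 < c < 1. If the (upper-bounded) false positive and false negative rates satisfy ᾱ ≥ c and β̄ ≥ c with ᾱ, β̄ < 1, then the empirical privacy estimate satisfies ε_emp = max{ ln((1 − ᾱ − δ)/β̄), ln((1 − β̄ − δ)/ᾱ), 0 } ≤ max{ ln((1 − c − δ)/c), 0 }. Hence, whenever the confidence-interval construction forces the rate upper bounds to be at least c, no empirical estimate larger than max{ ln((1 − c − δ)/c), 0 } can be obtained, even for an adversary who distinguishes perfectly. -/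
open Real

lemma ite_log_div_le_max_ite_log_div {a b a' b' : ℝ} (hb' : 0 < b') (ha : a ≤ a') (hb : b' ≤ b) :
    (if 0 < a / b then log (a / b) else 0) ≤
      max (if 0 < a' / b' then log (a' / b') else 0) 0 := by
  by_cases hab : 0 < a / b
  · have ha_pos : 0 < a := (div_pos_iff_of_pos_right (hb'.trans_le hb)).mp hab
    have hab' : a / b ≤ a' / b' := div_le_div₀ (ha_pos.le.trans ha) ha hb' hb
    rw [if_pos hab, if_pos (hab.trans_le hab')]
    exact le_max_of_le_left (log_le_log hab hab')
  · exact (if_neg hab).trans_le (le_max_right _ _)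

theorem max_auditable_eps_general (δ c αBar βBar : ℝ)
    (hc0 : 0 < c)
    (hαBar : c ≤ αBar)
    (hβBar : c ≤ βBar) :
    epsEmp δ αBar βBar ≤
      max (if 0 < (1 - c - δ) / c then Real.log ((1 - c - δ) / c) else 0) 0 :=
  max_le
    (max_le (ite_log_div_le_max_ite_log_div hc0 (by linarith) hβBar)
      (ite_log_div_le_max_ite_log_div hc0 (by linarith) hαBar))
    (le_max_right _ _)

/-- Maximum auditable `ε`: fix `δ ∈ [0,1]` and `0 < c < 1`. If the upper-bounded false
positive and false negative rates satisfy `c ≤ ᾱ < 1` and `c ≤ β̄ < 1`, then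
`ε_emp = max { ln((1 − ᾱ − δ)/β̄), ln((1 − β̄ − δ)/ᾱ), 0 } ≤ max { ln((1 − c − δ)/c), 0 }`
(where a logarithm with nonpositive argument does not contribute to the maximum). -/
theorem max_auditable_eps (δ c αBar βBar : ℝ)
    (hδ0 : 0 ≤ δ) (hδ1 : δ ≤ 1)
    (hc0 : 0 < c) (hc1 : c < 1)
    (hαBar : c ≤ αBar) (hαBar1 : αBar < 1)
    (hβBar : c ≤ βBar) (hβBar1 : βBar < 1) :
    epsEmp δ αBar βBar ≤
      max (if 0 < (1 - c - δ) / c then Real.log ((1 - c - δ) / c) else 0) 0 :=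
  max_auditable_eps_general δ c αBar βBar hc0 hαBar hβBar
end
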